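/- Under the hypotheses that Ŷ₁,...,Ŷ_L are conditionally independent given X_K (finite random variables), and for any constants R ∈ ℝ and a_ℓ ≥ 0, the set function g(S) = R + ∑_{ℓ∈S} a_ℓ − I(X_K; Ŷ_{S^c}) on subsets S ⊆ {1,...,L} is supermodular: g(S) + g(T) ≤ g(S ∪ T) + g(S ∩ T). -/
import Mathlib


open Finset

/-- Shannon entropy of the random variable `Z` under the pmf `p` on `Ω`. -/
noncomputable def ent {Ω β : Type*} [Fintype Ω] [Fintype β] [DecidableEq β]
    (p : Ω → ℝ) (Z : Ω → β) : ℝ :=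
  -∑ b : β, (∑ ω ∈ univ.filter fun ω => Z ω = b, p ω) *
      Real.log (∑ ω ∈ univ.filter fun ω => Z ω = b, p ω)

/-- Mutual information I(A;B) = H(A) + H(B) - H(A,B). -/
noncomputable def mi {Ω β γ : Type*} [Fintype Ω] [Fintype β] [Fintype γ]
    [DecidableEq β] [DecidableEq γ] (p : Ω → ℝ) (A : Ω → β) (B : Ω → γ) : ℝ :=
  ent p A + ent p B - ent p (fun ω => (A ω, B ω))

set_option linter.unusedSectionVars false
set_option maxHeartbeats 1000000

lemma ent_image {Ω' β' : Type*} [Fintype Ω'] [Fintype β'] [DecidableEq β']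
    (p : Ω' → ℝ) (Z : Ω' → β') :
    ent p Z = -∑ b ∈ Finset.univ.image Z,
        (∑ ω ∈ univ.filter fun ω => Z ω = b, p ω) *
          Real.log (∑ ω ∈ univ.filter fun ω => Z ω = b, p ω) := by
  rw [ent]
  congr 1
  refine (Finset.sum_subset (Finset.subset_univ _) fun b _ hb => ?_).symm
  have : Finset.univ.filter (fun ω => Z ω = b) = ∅ := by
    ext ω
    simp only [Finset.mem_filter, Finset.mem_univ, true_and, Finset.notMem_empty, iff_false]
    exact fun h' => hb (Finset.mem_image.mpr ⟨ω, Finset.mem_univ ω, h'⟩)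
  simp [this]

lemma ent_congr {Ω β γ : Type*} [Fintype Ω] [Fintype β] [Fintype γ]
    [DecidableEq β] [DecidableEq γ] (p : Ω → ℝ) (Z : Ω → β) (Z' : Ω → γ)
    (h : ∀ ω ω', Z ω = Z ω' ↔ Z' ω = Z' ω') : ent p Z = ent p Z' := by
  classical
  rw [ent_image, ent_image]
  congr 1
  refine Finset.sum_bij (fun b hb => Z' (Finset.mem_image.mp hb).choose) ?_ ?_ ?_ ?_
  · intro b hb
    exact Finset.mem_image.mpr ⟨_, Finset.mem_univ _, rfl⟩
  · intro b₁ hb₁ b₂ hb₂ heq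
    have h1 := (Finset.mem_image.mp hb₁).choose_spec.2
    have h2 := (Finset.mem_image.mp hb₂).choose_spec.2
    rw [← h1, ← h2]
    exact (h _ _).mpr heq
  · intro c hc
    obtain ⟨ω, -, rfl⟩ := Finset.mem_image.mp hc
    refine ⟨Z ω, Finset.mem_image.mpr ⟨ω, Finset.mem_univ ω, rfl⟩, ?_⟩
    have h1 := (Finset.mem_image.mp
      (Finset.mem_image.mpr ⟨ω, Finset.mem_univ ω, rfl⟩ : Z ω ∈ Finset.univ.image Z)).choose_spec.2
    exact (h _ _).mp h1
  · intro b hb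
    set ω₀ := (Finset.mem_image.mp hb).choose with hω₀
    have h1 : Z ω₀ = b := (Finset.mem_image.mp hb).choose_spec.2
    have hfil : Finset.univ.filter (fun ω => Z ω = b)
        = Finset.univ.filter (fun ω => Z' ω = Z' ω₀) := by
      ext ω
      simp only [Finset.mem_filter, Finset.mem_univ, true_and, ← h1]
      exact h ω ω₀
    rw [hfil]

lemma sum_mass_eq {Ω κ : Type*} [Fintype Ω] [Fintype κ] [DecidableEq κ]
    (p : Ω → ℝ) (P : Ω → Prop) (Q : κ → Ω → Prop) [DecidablePred P]
    [∀ c, DecidablePred (Q c)] (G : Ω → κ)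
    (h : ∀ ω c, Q c ω ↔ P ω ∧ G ω = c) :
    ∑ c : κ, (∑ ω ∈ univ.filter (Q c), p ω) = ∑ ω ∈ univ.filter P, p ω := by
  rw [← Finset.sum_fiberwise (univ.filter P) G p]
  refine Finset.sum_congr rfl fun c _ => Finset.sum_congr ?_ fun _ _ => rfl
  ext ω
  simp only [Finset.mem_filter, Finset.mem_univ, true_and, h ω c]

lemma mul_log_mul (a b : ℝ) :
    (a * b) * Real.log (a * b) = b * (a * Real.log a) + a * (b * Real.log b) := by
  rcases eq_or_ne a 0 with rfl | ha
  · simp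
  rcases eq_or_ne b 0 with rfl | hb
  · simp
  rw [Real.log_mul ha hb]; ring

lemma prod_log {ι : Type*} [DecidableEq ι] (s : Finset ι) (c : ι → ℝ) :
    (∏ i ∈ s, c i) * Real.log (∏ i ∈ s, c i)
      = ∑ i ∈ s, (∏ j ∈ s.erase i, c j) * (c i * Real.log (c i)) := by
  induction s using Finset.induction_on with
  | empty => simp
  | @insert a s ha ih =>
    rw [Finset.prod_insert ha, mul_log_mul, ih, Finset.sum_insert ha, Finset.erase_insert ha,
      Finset.mul_sum]
    congr 1
    refine Finset.sum_congr rfl fun i hi => ?_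
    rw [Finset.erase_insert_of_ne (by rintro rfl; exact ha hi),
      Finset.prod_insert (fun h => ha (Finset.mem_of_mem_erase h))]
    ring

lemma sum_prod_fn {ι 𝒵 : Type*} [Fintype ι] [DecidableEq ι] [Fintype 𝒵] (g : ι → 𝒵 → ℝ) :
    ∑ y : ι → 𝒵, ∏ i, g i (y i) = ∏ i, ∑ v, g i v := (Fintype.prod_sum g).symm

lemma prod_entropy {ι 𝒵 : Type*} [Fintype ι] [DecidableEq ι] [Fintype 𝒵]
    (f : ι → 𝒵 → ℝ) (h1 : ∀ i, ∑ v, f i v = 1) :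
    ∑ y : ι → 𝒵, (∏ i, f i (y i)) * Real.log (∏ i, f i (y i))
      = ∑ i, ∑ v, f i v * Real.log (f i v) := by
  have key : ∀ y : ι → 𝒵, (∏ i, f i (y i)) * Real.log (∏ i, f i (y i))
      = ∑ i, ∏ j, (if j = i then f j (y j) * Real.log (f j (y j)) else f j (y j)) := by
    intro y
    rw [prod_log Finset.univ (fun i => f i (y i))]
    refine Finset.sum_congr rfl fun i _ => ?_
    rw [← Finset.mul_prod_erase Finset.univ _ (Finset.mem_univ i)]
    simp only [if_pos rfl]
    rw [mul_comm]
    congr 1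
    exact Finset.prod_congr rfl fun j hj => by
      simp [if_neg (Finset.ne_of_mem_erase hj)]
  rw [Finset.sum_congr rfl fun y _ => key y, Finset.sum_comm]
  refine Finset.sum_congr rfl fun i _ => ?_
  rw [sum_prod_fn (fun j v => if j = i then f j v * Real.log (f j v) else f j v)]
  rw [← Finset.mul_prod_erase Finset.univ _ (Finset.mem_univ i)]
  simp only [if_pos rfl]
  have : ∀ j ∈ Finset.univ.erase i,
      (∑ v, if j = i then f j v * Real.log (f j v) else f j v) = 1 := by
    intro j hj
    simp [if_neg (Finset.ne_of_mem_erase hj), h1 j]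
  rw [Finset.prod_congr rfl this, Finset.prod_const_one, mul_one]
  simp

lemma ssa_core {α β γ : Type*} [Fintype α] [Fintype β] [Fintype γ]
    (m : α → β → γ → ℝ) (hm0 : ∀ u v w, 0 ≤ m u v w)
    (hm1 : ∑ u, ∑ v, ∑ w, m u v w = 1) :
    -(∑ u, ∑ v, ∑ w, m u v w * Real.log (m u v w))
      - ∑ v, (∑ u, ∑ w, m u v w) * Real.log (∑ u, ∑ w, m u v w)
    ≤ -(∑ u, ∑ v, (∑ w, m u v w) * Real.log (∑ w, m u v w))
      - ∑ v, ∑ w, (∑ u, m u v w) * Real.log (∑ u, m u v w) := by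
  classical
  set A : α → β → ℝ := fun u v => ∑ w, m u v w with hA
  set B : β → γ → ℝ := fun v w => ∑ u, m u v w with hB
  set C : β → ℝ := fun v => ∑ u, ∑ w, m u v w with hC
  have hA0 : ∀ u v, 0 ≤ A u v := fun u v => Finset.sum_nonneg fun w _ => hm0 u v w
  have hB0 : ∀ v w, 0 ≤ B v w := fun v w => Finset.sum_nonneg fun u _ => hm0 u v w
  have hC0 : ∀ v, 0 ≤ C v := fun v => Finset.sum_nonneg fun u _ => hA0 u v
  have hmA : ∀ u v w, m u v w ≤ A u v := fun u v w =>
    Finset.single_le_sum (fun w' _ => hm0 u v w') (Finset.mem_univ w)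
  have hmB : ∀ u v w, m u v w ≤ B v w := fun u v w =>
    Finset.single_le_sum (fun u' _ => hm0 u' v w) (Finset.mem_univ u)
  have hAC : ∀ u v, A u v ≤ C v := fun u v =>
    Finset.single_le_sum (fun u' _ => hA0 u' v) (Finset.mem_univ u)
  have hsumA : ∀ v, ∑ u, A u v = C v := fun v => rfl
  have hsumB : ∀ v, ∑ w, B v w = C v := fun v => Finset.sum_comm
  set q : α → β → γ → ℝ := fun u v w => if C v = 0 then 0 else A u v * B v w / C v with hq
  have hq0 : ∀ u v w, 0 ≤ q u v w := by
    intro u v w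
    rw [hq]; dsimp only
    split
    · exact le_refl 0
    · exact div_nonneg (mul_nonneg (hA0 u v) (hB0 v w)) (hC0 v)
  have hterm : ∀ u v w,
      m u v w * Real.log (A u v) + m u v w * Real.log (B v w)
        - m u v w * Real.log (m u v w) - m u v w * Real.log (C v)
      ≤ q u v w - m u v w := by
    intro u v w
    rcases eq_or_lt_of_le (hm0 u v w) with hm | hm
    · simp only [← hm, zero_mul, add_zero, sub_zero, zero_add, sub_self]
      linarith [hq0 u v w]
    · have hApos : 0 < A u v := lt_of_lt_of_le hm (hmA u v w)
      have hBpos : 0 < B v w := lt_of_lt_of_le hm (hmB u v w)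
      have hCpos : 0 < C v := lt_of_lt_of_le hApos (hAC u v)
      have hqv : q u v w = A u v * B v w / C v := by
        rw [hq]; dsimp only; rw [if_neg (ne_of_gt hCpos)]
      have hqpos : 0 < q u v w := by rw [hqv]; positivity
      have hlog : Real.log (q u v w / m u v w) ≤ q u v w / m u v w - 1 :=
        Real.log_le_sub_one_of_pos (by positivity)
      have hexp : Real.log (q u v w / m u v w)
          = Real.log (A u v) + Real.log (B v w) - Real.log (C v) - Real.log (m u v w) := by
        rw [Real.log_div (ne_of_gt hqpos) (ne_of_gt hm), hqv,
          Real.log_div (by positivity) (ne_of_gt hCpos),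
          Real.log_mul (ne_of_gt hApos) (ne_of_gt hBpos)]
      have hmul := mul_le_mul_of_nonneg_left hlog (le_of_lt hm)
      rw [hexp] at hmul
      have h2 : m u v w * (q u v w / m u v w - 1) = q u v w - m u v w := by
        field_simp
      rw [h2] at hmul
      nlinarith [hmul]
  have hsumq : ∑ u, ∑ v, ∑ w, q u v w ≤ 1 := by
    have hv : ∀ v, ∑ u, ∑ w, q u v w ≤ C v := by
      intro v
      by_cases hcv : C v = 0
      · simp [hq, hcv, hC0 v]
      · have heq : ∑ u, ∑ w, q u v w = (∑ u, A u v) * (∑ w, B v w) / C v := by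
          simp only [hq, if_neg hcv]
          rw [Finset.sum_mul, Finset.sum_div]
          refine Finset.sum_congr rfl fun u _ => ?_
          rw [← Finset.sum_div, ← Finset.mul_sum]
        rw [heq, hsumA, hsumB, mul_div_assoc, div_self hcv, mul_one]
    calc ∑ u, ∑ v, ∑ w, q u v w = ∑ v, ∑ u, ∑ w, q u v w := Finset.sum_comm
      _ ≤ ∑ v, C v := Finset.sum_le_sum fun v _ => hv v
      _ = 1 := by rw [← hm1]; exact Finset.sum_comm
  have key : ∑ u, ∑ v, ∑ w,
      (m u v w * Real.log (A u v) + m u v w * Real.log (B v w)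
        - m u v w * Real.log (m u v w) - m u v w * Real.log (C v)) ≤ 0 := by
    calc ∑ u, ∑ v, ∑ w, (m u v w * Real.log (A u v) + m u v w * Real.log (B v w)
          - m u v w * Real.log (m u v w) - m u v w * Real.log (C v))
        ≤ ∑ u, ∑ v, ∑ w, (q u v w - m u v w) := by
          refine Finset.sum_le_sum fun u _ => Finset.sum_le_sum fun v _ =>
            Finset.sum_le_sum fun w _ => hterm u v w
      _ = (∑ u, ∑ v, ∑ w, q u v w) - 1 := by
          rw [← hm1]
          simp [Finset.sum_sub_distrib]
      _ ≤ 0 := by linarith [hsumq]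
  simp only [Finset.sum_sub_distrib, Finset.sum_add_distrib] at key
  have E1 : ∑ u, ∑ v, A u v * Real.log (A u v)
      = ∑ u, ∑ v, ∑ w, m u v w * Real.log (A u v) :=
    Finset.sum_congr rfl fun u _ => Finset.sum_congr rfl fun v _ => by
      rw [hA]; exact Finset.sum_mul _ _ _
  have E2 : ∑ v, ∑ w, B v w * Real.log (B v w)
      = ∑ u, ∑ v, ∑ w, m u v w * Real.log (B v w) := by
    rw [show (∑ u, ∑ v, ∑ w, m u v w * Real.log (B v w))
        = ∑ v, ∑ u, ∑ w, m u v w * Real.log (B v w) from Finset.sum_comm]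
    refine Finset.sum_congr rfl fun v _ => ?_
    rw [Finset.sum_comm]
    refine Finset.sum_congr rfl fun w _ => ?_
    rw [hB]; exact Finset.sum_mul _ _ _
  have E3 : ∑ v, C v * Real.log (C v)
      = ∑ u, ∑ v, ∑ w, m u v w * Real.log (C v) := by
    rw [show (∑ u, ∑ v, ∑ w, m u v w * Real.log (C v))
        = ∑ v, ∑ u, ∑ w, m u v w * Real.log (C v) from Finset.sum_comm]
    refine Finset.sum_congr rfl fun v _ => ?_
    rw [hC, Finset.sum_mul]
    exact Finset.sum_congr rfl fun u _ => Finset.sum_mul _ _ _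
  show -(∑ u, ∑ v, ∑ w, m u v w * Real.log (m u v w)) - ∑ v, C v * Real.log (C v)
    ≤ -(∑ u, ∑ v, A u v * Real.log (A u v)) - ∑ v, ∑ w, B v w * Real.log (B v w)
  linarith [key, E1, E2, E3]

lemma strong_subadd {Ω α β γ : Type*} [Fintype Ω] [Fintype α] [Fintype β] [Fintype γ]
    [DecidableEq α] [DecidableEq β] [DecidableEq γ]
    (p : Ω → ℝ) (hp0 : ∀ ω, 0 ≤ p ω) (hp1 : ∑ ω, p ω = 1)
    (U : Ω → α) (V : Ω → β) (W : Ω → γ) :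
    ent p (fun ω => (U ω, V ω, W ω)) + ent p V
      ≤ ent p (fun ω => (U ω, V ω)) + ent p (fun ω => (V ω, W ω)) := by
  classical
  have margUV : ∀ u v, (∑ ω ∈ univ.filter fun ω => (U ω, V ω) = (u, v), p ω)
      = ∑ w, ∑ ω ∈ univ.filter fun ω => (U ω, V ω, W ω) = (u, v, w), p ω := fun u v =>
    (sum_mass_eq p _ _ W (fun ω c => by simp only [Prod.mk.injEq]; try tauto)).symm
  have margVW : ∀ v w, (∑ ω ∈ univ.filter fun ω => (V ω, W ω) = (v, w), p ω)
      = ∑ u, ∑ ω ∈ univ.filter fun ω => (U ω, V ω, W ω) = (u, v, w), p ω := fun v w =>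
    (sum_mass_eq p _ _ U (fun ω c => by simp only [Prod.mk.injEq]; try tauto)).symm
  have margV : ∀ v, (∑ ω ∈ univ.filter fun ω => V ω = v, p ω)
      = ∑ u, ∑ w, ∑ ω ∈ univ.filter fun ω => (U ω, V ω, W ω) = (u, v, w), p ω := by
    intro v
    rw [← sum_mass_eq p (fun ω => V ω = v) (fun u ω => (U ω, V ω) = (u, v)) U
      (fun ω c => by simp only [Prod.mk.injEq]; try tauto)]
    exact Finset.sum_congr rfl fun u _ => margUV u v
  have hm0 : ∀ u v w, (0:ℝ) ≤ ∑ ω ∈ univ.filter fun ω => (U ω, V ω, W ω) = (u, v, w), p ω :=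
    fun u v w => Finset.sum_nonneg fun ω _ => hp0 ω
  have hm1 : ∑ u, ∑ v, ∑ w, (∑ ω ∈ univ.filter fun ω => (U ω, V ω, W ω) = (u, v, w), p ω)
      = 1 := by
    have s2 : ∀ u, (∑ ω ∈ univ.filter fun ω => U ω = u, p ω)
        = ∑ v, ∑ ω ∈ univ.filter fun ω => (U ω, V ω) = (u, v), p ω := fun u =>
      (sum_mass_eq p _ _ V (fun ω c => by simp only [Prod.mk.injEq]; try tauto)).symm
    have s3 : ∑ u, (∑ ω ∈ univ.filter fun ω => U ω = u, p ω) = 1 := by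
      rw [sum_mass_eq p (fun _ => True) _ U (fun ω c => by simp)]
      rw [Finset.filter_true]
      exact hp1
    rw [← s3]
    refine Finset.sum_congr rfl fun u _ => ?_
    rw [s2 u]
    exact Finset.sum_congr rfl fun v _ => (margUV u v).symm
  have main := ssa_core
    (fun u v w => ∑ ω ∈ univ.filter fun ω => (U ω, V ω, W ω) = (u, v, w), p ω) hm0 hm1
  have e1 : ent p (fun ω => (U ω, V ω, W ω))
      = -∑ u, ∑ v, ∑ w, (∑ ω ∈ univ.filter fun ω => (U ω, V ω, W ω) = (u, v, w), p ω)
          * Real.log (∑ ω ∈ univ.filter fun ω => (U ω, V ω, W ω) = (u, v, w), p ω) := by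
    rw [ent]
    simp only [Fintype.sum_prod_type]
  have e2 : ent p (fun ω => (U ω, V ω))
      = -∑ u, ∑ v, (∑ w, ∑ ω ∈ univ.filter fun ω => (U ω, V ω, W ω) = (u, v, w), p ω)
          * Real.log (∑ w, ∑ ω ∈ univ.filter fun ω => (U ω, V ω, W ω) = (u, v, w), p ω) := by
    rw [ent]
    simp only [Fintype.sum_prod_type, margUV]
  have e3 : ent p (fun ω => (V ω, W ω))
      = -∑ v, ∑ w, (∑ u, ∑ ω ∈ univ.filter fun ω => (U ω, V ω, W ω) = (u, v, w), p ω)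
          * Real.log (∑ u, ∑ ω ∈ univ.filter fun ω => (U ω, V ω, W ω) = (u, v, w), p ω) := by
    rw [ent]
    simp only [Fintype.sum_prod_type, margVW]
  have e4 : ent p V
      = -∑ v, (∑ u, ∑ w, ∑ ω ∈ univ.filter fun ω => (U ω, V ω, W ω) = (u, v, w), p ω)
          * Real.log (∑ u, ∑ w,
              ∑ ω ∈ univ.filter fun ω => (U ω, V ω, W ω) = (u, v, w), p ω) := by
    rw [ent]
    simp only [margV]
  rw [e1, e2, e3, e4]
  exact main

section
variable {L : ℕ} {𝒳 𝒵 : Type*} [Fintype 𝒳] [Fintype 𝒵] [DecidableEq 𝒳] [DecidableEq 𝒵]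

lemma massXY (pX : 𝒳 → ℝ) (q : Fin L → 𝒳 → 𝒵 → ℝ) (hq1 : ∀ ℓ x, ∑ z, q ℓ x z = 1)
    (p : 𝒳 × (Fin L → 𝒵) → ℝ) (hfac : ∀ x z, p (x, z) = pX x * ∏ ℓ, q ℓ x (z ℓ))
    (T : Finset (Fin L)) (x : 𝒳) (y : {ℓ // ℓ ∈ T} → 𝒵) :
    (∑ ω ∈ univ.filter fun ω : 𝒳 × (Fin L → 𝒵) =>
        (ω.1, fun ℓ : {ℓ // ℓ ∈ T} => ω.2 ℓ.1) = (x, y), p ω)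
      = pX x * ∏ ℓ : {ℓ // ℓ ∈ T}, q ℓ.1 x (y ℓ) := by
  classical
  rw [Finset.sum_filter, Fintype.sum_prod_type]
  have step1 : ∀ x' (z : Fin L → 𝒵),
      (if ((x', fun ℓ : {ℓ // ℓ ∈ T} => z ℓ.1) = (x, y)) then p (x', z) else 0)
        = if x' = x then
            (if (fun ℓ : {ℓ // ℓ ∈ T} => z ℓ.1) = y then p (x', z) else 0) else 0 := by
    intro x' z
    by_cases h1 : x' = x <;> by_cases h2 : (fun ℓ : {ℓ // ℓ ∈ T} => z ℓ.1) = y <;>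
      simp [Prod.ext_iff, h1, h2]
  simp only [step1]
  rw [Finset.sum_comm]
  simp only [Finset.sum_ite_eq', Finset.mem_univ, if_true]
  simp only [hfac]
  have step2 : ∀ z : Fin L → 𝒵,
      (if (fun ℓ : {ℓ // ℓ ∈ T} => z ℓ.1) = y then pX x * ∏ ℓ, q ℓ x (z ℓ) else 0)
        = pX x * (if (fun ℓ : {ℓ // ℓ ∈ T} => z ℓ.1) = y then ∏ ℓ, q ℓ x (z ℓ) else 0) := by
    intro z; split <;> simp
  simp only [step2, ← Finset.mul_sum]
  congr 1
  have hpoint : ∀ z : Fin L → 𝒵,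
      (if (fun ℓ : {ℓ // ℓ ∈ T} => z ℓ.1) = y then ∏ ℓ, q ℓ x (z ℓ) else 0)
        = ∏ ℓ, (if h : ℓ ∈ T then (if z ℓ = y ⟨ℓ, h⟩ then q ℓ x (z ℓ) else 0)
            else q ℓ x (z ℓ)) := by
    intro z
    by_cases hz : (fun ℓ : {ℓ // ℓ ∈ T} => z ℓ.1) = y
    · rw [if_pos hz]
      refine Finset.prod_congr rfl fun ℓ _ => ?_
      by_cases hT : ℓ ∈ T
      · have hzy : z ℓ = y ⟨ℓ, hT⟩ := congrFun hz ⟨ℓ, hT⟩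
        rw [dif_pos hT, if_pos hzy]
      · rw [dif_neg hT]
    · rw [if_neg hz]
      have hex : ∃ ℓ : {ℓ // ℓ ∈ T}, z ℓ.1 ≠ y ℓ := by
        by_contra hall
        push_neg at hall
        exact hz (funext fun ℓ => hall ℓ)
      obtain ⟨ℓ, hℓ⟩ := hex
      refine (Finset.prod_eq_zero (Finset.mem_univ ℓ.1) ?_).symm
      rw [dif_pos ℓ.2, if_neg (by simpa using hℓ)]
  simp only [hpoint]
  rw [sum_prod_fn (fun ℓ v => if h : ℓ ∈ T then (if v = y ⟨ℓ, h⟩ then q ℓ x v else 0)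
      else q ℓ x v)]
  have hfactor : ∀ ℓ : Fin L,
      (∑ v, if h : ℓ ∈ T then (if v = y ⟨ℓ, h⟩ then q ℓ x v else 0) else q ℓ x v)
        = if h : ℓ ∈ T then q ℓ x (y ⟨ℓ, h⟩) else 1 := by
    intro ℓ
    by_cases hT : ℓ ∈ T
    · simp only [dif_pos hT]
      rw [Finset.sum_ite_eq' Finset.univ (y ⟨ℓ, hT⟩) (fun v => q ℓ x v)]
      simp
    · simp only [dif_neg hT, hq1]
  rw [Finset.prod_congr rfl fun ℓ _ => hfactor ℓ]
  rw [← Finset.prod_subset (Finset.subset_univ T) (fun ℓ _ hT => by rw [dif_neg hT])]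
  rw [← Finset.prod_attach T (fun ℓ => if h : ℓ ∈ T then q ℓ x (y ⟨ℓ, h⟩) else 1)]
  rw [Finset.univ_eq_attach]
  exact Finset.prod_congr rfl fun ℓ _ => by rw [dif_pos ℓ.2]


lemma entX (pX : 𝒳 → ℝ) (q : Fin L → 𝒳 → 𝒵 → ℝ) (hq1 : ∀ ℓ x, ∑ z, q ℓ x z = 1)
    (p : 𝒳 × (Fin L → 𝒵) → ℝ) (hfac : ∀ x z, p (x, z) = pX x * ∏ ℓ, q ℓ x (z ℓ)) :
    ent p (fun ω : 𝒳 × (Fin L → 𝒵) => ω.1) = -∑ x, pX x * Real.log (pX x) := by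
  classical
  rw [ent]
  have hm : ∀ x, (∑ ω ∈ univ.filter fun ω : 𝒳 × (Fin L → 𝒵) => ω.1 = x, p ω) = pX x := by
    intro x
    rw [Finset.sum_filter, Fintype.sum_prod_type]
    have : ∀ x' : 𝒳, (∑ z : Fin L → 𝒵, if x' = x then p (x', z) else 0)
        = if x' = x then (∑ z : Fin L → 𝒵, p (x', z)) else 0 := by
      intro x'; split <;> simp
    simp only [this]
    rw [Finset.sum_ite_eq' Finset.univ x (fun x' => ∑ z : Fin L → 𝒵, p (x', z))]
    simp only [Finset.mem_univ, if_true, hfac, ← Finset.mul_sum]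
    rw [sum_prod_fn (fun ℓ v => q ℓ x v)]
    simp [hq1 _ x]
  simp only [hm]

lemma entXY (pX : 𝒳 → ℝ) (q : Fin L → 𝒳 → 𝒵 → ℝ) (hq1 : ∀ ℓ x, ∑ z, q ℓ x z = 1)
    (p : 𝒳 × (Fin L → 𝒵) → ℝ) (hfac : ∀ x z, p (x, z) = pX x * ∏ ℓ, q ℓ x (z ℓ))
    (T : Finset (Fin L)) :
    ent p (fun ω : 𝒳 × (Fin L → 𝒵) => (ω.1, fun ℓ : {ℓ // ℓ ∈ T} => ω.2 ℓ.1))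
      = (-∑ x, pX x * Real.log (pX x))
        + ∑ ℓ ∈ T, (-∑ x, pX x * ∑ v, q ℓ x v * Real.log (q ℓ x v)) := by
  classical
  rw [ent]
  simp only [Fintype.sum_prod_type]
  have hmass := massXY pX q hq1 p hfac T
  have hsum : ∀ x : 𝒳, (∑ y : {ℓ // ℓ ∈ T} → 𝒵,
      (∑ ω ∈ univ.filter fun ω : 𝒳 × (Fin L → 𝒵) =>
          (ω.1, fun ℓ : {ℓ // ℓ ∈ T} => ω.2 ℓ.1) = (x, y), p ω)
        * Real.log (∑ ω ∈ univ.filter fun ω : 𝒳 × (Fin L → 𝒵) =>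
          (ω.1, fun ℓ : {ℓ // ℓ ∈ T} => ω.2 ℓ.1) = (x, y), p ω))
      = pX x * Real.log (pX x)
        + pX x * ∑ ℓ : {ℓ // ℓ ∈ T}, ∑ v, q ℓ.1 x v * Real.log (q ℓ.1 x v) := by
    intro x
    simp only [hmass, mul_log_mul]
    rw [Finset.sum_add_distrib, ← Finset.sum_mul, ← Finset.mul_sum]
    rw [sum_prod_fn (fun (ℓ : {ℓ // ℓ ∈ T}) v => q ℓ.1 x v)]
    rw [prod_entropy (fun (ℓ : {ℓ // ℓ ∈ T}) v => q ℓ.1 x v) (fun ℓ => hq1 ℓ.1 x)]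
    simp [hq1 _ x]
  rw [Finset.sum_congr rfl fun x _ => hsum x]
  rw [Finset.sum_add_distrib, neg_add]
  congr 1
  have swap : ∑ x, pX x * ∑ ℓ : {ℓ // ℓ ∈ T}, ∑ v, q ℓ.1 x v * Real.log (q ℓ.1 x v)
      = ∑ ℓ ∈ T, ∑ x, pX x * ∑ v, q ℓ x v * Real.log (q ℓ x v) := by
    simp only [Finset.mul_sum]
    rw [Finset.sum_comm, Finset.univ_eq_attach]
    exact Finset.sum_attach T (fun ℓ => ∑ x, ∑ v, pX x * (q ℓ x v * Real.log (q ℓ x v)))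
  rw [swap, ← Finset.sum_neg_distrib]

end

/-- with Ŷ₁,...,Ŷ_L conditionally independent given X,
g(S) = R + ∑_{ℓ∈S} a_ℓ − I(X; Ŷ_{Sᶜ}) is supermodular. -/
theorem g_supermodular {L : ℕ} {𝒳 𝒵 : Type*}
    [Fintype 𝒳] [Fintype 𝒵] [DecidableEq 𝒳] [DecidableEq 𝒵]
    (pX : 𝒳 → ℝ) (q : Fin L → 𝒳 → 𝒵 → ℝ)
    (hpX0 : ∀ x, 0 ≤ pX x) (hpX1 : ∑ x, pX x = 1)
    (hq0 : ∀ ℓ x z, 0 ≤ q ℓ x z) (hq1 : ∀ ℓ x, ∑ z, q ℓ x z = 1)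
    (p : 𝒳 × (Fin L → 𝒵) → ℝ)
    (hfac : ∀ x z, p (x, z) = pX x * ∏ ℓ, q ℓ x (z ℓ))
    (R : ℝ) (a : Fin L → ℝ) (ha : ∀ ℓ, 0 ≤ a ℓ)
    (g : Finset (Fin L) → ℝ)
    (hg : ∀ S : Finset (Fin L), g S = R + (∑ ℓ ∈ S, a ℓ)
        - mi p (fun ω => ω.1) (fun ω (ℓ : {ℓ // ℓ ∈ Sᶜ}) => ω.2 ℓ.1)) :
    ∀ S T : Finset (Fin L), g S + g T ≤ g (S ∪ T) + g (S ∩ T) := by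
  classical
  intro S T
  have hp0 : ∀ ω : 𝒳 × (Fin L → 𝒵), 0 ≤ p ω := by
    intro ω
    have h : p (ω.1, ω.2) = pX ω.1 * ∏ ℓ, q ℓ ω.1 (ω.2 ℓ) := hfac ω.1 ω.2
    rw [show ω = (ω.1, ω.2) from rfl, h]
    exact mul_nonneg (hpX0 _) (Finset.prod_nonneg fun ℓ _ => hq0 ℓ _ _)
  have hp1 : ∑ ω : 𝒳 × (Fin L → 𝒵), p ω = 1 := by
    rw [Fintype.sum_prod_type]
    have hx : ∀ x, ∑ z : Fin L → 𝒵, p (x, z) = pX x := by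
      intro x
      simp only [hfac, ← Finset.mul_sum]
      rw [sum_prod_fn (fun ℓ v => q ℓ x v)]
      simp [hq1 _ x]
    simp only [hx, hpX1]
  have hmi : ∀ A : Finset (Fin L),
      mi p (fun ω => ω.1) (fun ω (ℓ : {ℓ // ℓ ∈ A}) => ω.2 ℓ.1)
        = ent p (fun ω (ℓ : {ℓ // ℓ ∈ A}) => ω.2 ℓ.1)
          - ∑ ℓ ∈ A, (-∑ x, pX x * ∑ v, q ℓ x v * Real.log (q ℓ x v)) := by
    intro A
    simp only [mi]
    rw [entX pX q hq1 p hfac, entXY pX q hq1 p hfac A]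
    ring
  have submod : ∀ A B : Finset (Fin L),
      ent p (fun ω (ℓ : {ℓ // ℓ ∈ A ∪ B}) => ω.2 ℓ.1)
        + ent p (fun ω (ℓ : {ℓ // ℓ ∈ A ∩ B}) => ω.2 ℓ.1)
      ≤ ent p (fun ω (ℓ : {ℓ // ℓ ∈ A}) => ω.2 ℓ.1)
        + ent p (fun ω (ℓ : {ℓ // ℓ ∈ B}) => ω.2 ℓ.1) := by
    intro A B
    have h1 := strong_subadd p hp0 hp1
      (fun ω (ℓ : {ℓ // ℓ ∈ A \ B}) => ω.2 ℓ.1)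
      (fun ω (ℓ : {ℓ // ℓ ∈ A ∩ B}) => ω.2 ℓ.1)
      (fun ω (ℓ : {ℓ // ℓ ∈ B \ A}) => ω.2 ℓ.1)
    have c1 : ent p (fun ω : 𝒳 × (Fin L → 𝒵) => fun ℓ : {ℓ // ℓ ∈ A ∪ B} => ω.2 ℓ.1)
        = ent p (fun ω : 𝒳 × (Fin L → 𝒵) =>
            ((fun ℓ : {ℓ // ℓ ∈ A \ B} => ω.2 ℓ.1), (fun ℓ : {ℓ // ℓ ∈ A ∩ B} => ω.2 ℓ.1),
             (fun ℓ : {ℓ // ℓ ∈ B \ A} => ω.2 ℓ.1))) := by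
      refine ent_congr p _ _ fun ω ω' => ?_
      simp only [funext_iff, Subtype.forall, Prod.ext_iff, Finset.mem_union, Finset.mem_sdiff,
        Finset.mem_inter]
      constructor
      · intro h
        exact ⟨fun ℓ hℓ => h ℓ (Or.inl hℓ.1), fun ℓ hℓ => h ℓ (Or.inl hℓ.1),
          fun ℓ hℓ => h ℓ (Or.inr hℓ.1)⟩
      · rintro ⟨hab, hi, hba⟩ ℓ hℓ
        by_cases hA : ℓ ∈ A
        · by_cases hB : ℓ ∈ B
          · exact hi ℓ ⟨hA, hB⟩
          · exact hab ℓ ⟨hA, hB⟩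
        · rcases hℓ with h | h
          · exact absurd h hA
          · exact hba ℓ ⟨h, hA⟩
    have c3 : ent p (fun ω : 𝒳 × (Fin L → 𝒵) => fun ℓ : {ℓ // ℓ ∈ A} => ω.2 ℓ.1)
        = ent p (fun ω : 𝒳 × (Fin L → 𝒵) =>
            ((fun ℓ : {ℓ // ℓ ∈ A \ B} => ω.2 ℓ.1),
             (fun ℓ : {ℓ // ℓ ∈ A ∩ B} => ω.2 ℓ.1))) := by
      refine ent_congr p _ _ fun ω ω' => ?_
      simp only [funext_iff, Subtype.forall, Prod.ext_iff, Finset.mem_sdiff, Finset.mem_inter]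
      constructor
      · intro h
        exact ⟨fun ℓ hℓ => h ℓ hℓ.1, fun ℓ hℓ => h ℓ hℓ.1⟩
      · rintro ⟨h1, h2⟩ ℓ hℓ
        by_cases hB : ℓ ∈ B
        · exact h2 ℓ ⟨hℓ, hB⟩
        · exact h1 ℓ ⟨hℓ, hB⟩
    have c4 : ent p (fun ω : 𝒳 × (Fin L → 𝒵) => fun ℓ : {ℓ // ℓ ∈ B} => ω.2 ℓ.1)
        = ent p (fun ω : 𝒳 × (Fin L → 𝒵) =>
            ((fun ℓ : {ℓ // ℓ ∈ A ∩ B} => ω.2 ℓ.1),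
             (fun ℓ : {ℓ // ℓ ∈ B \ A} => ω.2 ℓ.1))) := by
      refine ent_congr p _ _ fun ω ω' => ?_
      simp only [funext_iff, Subtype.forall, Prod.ext_iff, Finset.mem_sdiff, Finset.mem_inter]
      constructor
      · intro h
        exact ⟨fun ℓ hℓ => h ℓ hℓ.2, fun ℓ hℓ => h ℓ hℓ.1⟩
      · rintro ⟨h1, h2⟩ ℓ hℓ
        by_cases hA : ℓ ∈ A
        · exact h1 ℓ ⟨hA, hℓ⟩
        · exact h2 ℓ ⟨hℓ, hA⟩
    rw [c1, c3, c4]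
    exact h1
  rw [hg S, hg T, hg (S ∪ T), hg (S ∩ T), hmi Sᶜ, hmi Tᶜ, hmi (S ∪ T)ᶜ, hmi (S ∩ T)ᶜ]
  have hsa : ∑ ℓ ∈ S, a ℓ + ∑ ℓ ∈ T, a ℓ = ∑ ℓ ∈ S ∪ T, a ℓ + ∑ ℓ ∈ S ∩ T, a ℓ :=
    Finset.sum_union_inter.symm
  have hsc : (∑ ℓ ∈ Sᶜ, (-∑ x, pX x * ∑ v, q ℓ x v * Real.log (q ℓ x v)))
      + (∑ ℓ ∈ Tᶜ, (-∑ x, pX x * ∑ v, q ℓ x v * Real.log (q ℓ x v)))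
      = (∑ ℓ ∈ (S ∪ T)ᶜ, (-∑ x, pX x * ∑ v, q ℓ x v * Real.log (q ℓ x v)))
        + (∑ ℓ ∈ (S ∩ T)ᶜ, (-∑ x, pX x * ∑ v, q ℓ x v * Real.log (q ℓ x v))) := by
    rw [Finset.compl_union, Finset.compl_inter]
    have := Finset.sum_union_inter (s₁ := Sᶜ) (s₂ := Tᶜ)
      (f := fun ℓ => -∑ x, pX x * ∑ v, q ℓ x v * Real.log (q ℓ x v))
    linarith [this]
  have hE := submod Sᶜ Tᶜ
  rw [show Sᶜ ∪ Tᶜ = (S ∩ T)ᶜ from (Finset.compl_inter S T).symm,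
      show Sᶜ ∩ Tᶜ = (S ∪ T)ᶜ from (Finset.compl_union S T).symm] at hE
  linarith [hE, hsa, hsc]
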